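/- Let (V,q) be a nondegenerate quadratic space over a field F of characteristic 2 and τ an involution in O(V,q) with R(τ) = K(τ). Then the quadratic form φ on R(τ) defined by φ(v) = ω_τ(v,v) is totally singular (its polar form vanishes identically) and equals -q restricted to R(τ), i.e., φ(v) = q(v) for all v ∈ R(τ). -/

import Mathlib

/-! For an isometry `τ`, expanding `q (τ x) = q ((τ x - x) + x)` gives
`b_q (τ x - x, x) = -q (τ x - x)`, which equals `q (τ x - x)` in characteristic 2.
When `R(τ) ⊆ K(τ)`, `τ` fixes every residual vector `w`, so
`b_q (τ x - x, w) = b_q (τ x, τ w) - b_q (x, w) = 0`: the residual space is totally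
isotropic for `b_q`, and `q` is additive on it, which gives the additivity of
`v ↦ b_q (v, x)` along `v = τ x - x`. -/

namespace QuadraticMap

variable {R M N : Type*} [CommRing R] [AddCommGroup M] [Module R M] [AddCommGroup N]
  [Module R N] {Q : QuadraticMap R M N} {τ : M →ₗ[R] M}

theorem polar_map_map_of_isometry (hτ : ∀ x, Q (τ x) = Q x) (u v : M) :
    polar Q (τ u) (τ v) = polar Q u v := by
  simp only [polar, ← map_add, hτ]

theorem polar_sub_self_left_of_isometry (hτ : ∀ x, Q (τ x) = Q x) (x : M) :
    polar Q (τ x - x) x = -Q (τ x - x) := by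
  rw [polar, sub_add_cancel, hτ]
  abel

theorem map_sub_self_of_range_le_ker (hRK : LinearMap.range (τ - 1) ≤ LinearMap.ker (τ - 1))
    (x : M) : τ (τ x - x) = τ x - x := by
  have hmem : τ x - x ∈ LinearMap.ker (τ - 1) := hRK (LinearMap.mem_range_self (τ - 1) x)
  simpa [sub_eq_zero] using hmem

theorem isOrtho_sub_self_of_range_le_ker (hτ : ∀ x, Q (τ x) = Q x)
    (hRK : LinearMap.range (τ - 1) ≤ LinearMap.ker (τ - 1)) (x y : M) :
    Q.IsOrtho (τ x - x) (τ y - y) := by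
  rw [← isOrtho_polarBilin, polarBilin_apply_apply, polar_sub_left]
  conv_lhs => enter [1, 3]; rw [← map_sub_self_of_range_le_ker hRK y]
  rw [polar_map_map_of_isometry hτ, sub_self]

theorem polar_sub_self_add_of_range_le_ker (hτ : ∀ x, Q (τ x) = Q x)
    (hRK : LinearMap.range (τ - 1) ≤ LinearMap.ker (τ - 1)) (x y : M) :
    polar Q (τ (x + y) - (x + y)) (x + y) = polar Q (τ x - x) x + polar Q (τ y - y) y := by
  have hsplit : τ (x + y) - (x + y) = (τ x - x) + (τ y - y) := by
    rw [map_add]; abel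
  rw [polar_sub_self_left_of_isometry hτ, hsplit,
    isOrtho_def.mp (isOrtho_sub_self_of_range_le_ker hτ hRK x y), neg_add,
    polar_sub_self_left_of_isometry hτ, polar_sub_self_left_of_isometry hτ]

end QuadraticMap

theorem wall_stmt18_general {F V : Type*} [Field F] [CharP F 2] [AddCommGroup V] [Module F V]
    (q : QuadraticForm F V)
    (τ : V →ₗ[F] V) (hτ : ∀ x, q (τ x) = q x)
    (hRK : LinearMap.range (τ - LinearMap.id) = LinearMap.ker (τ - LinearMap.id)) :
    (∀ x : V, QuadraticMap.polarBilin q (τ x - x) x = q (τ x - x)) ∧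
    (∀ x y : V, QuadraticMap.polarBilin q (τ (x + y) - (x + y)) (x + y) =
      QuadraticMap.polarBilin q (τ x - x) x + QuadraticMap.polarBilin q (τ y - y) y) := by
  simp only [QuadraticMap.polarBilin_apply_apply]
  exact ⟨fun x => by rw [QuadraticMap.polar_sub_self_left_of_isometry hτ, CharTwo.neg_eq],
    QuadraticMap.polar_sub_self_add_of_range_le_ker hτ hRK.le⟩

theorem wall_stmt18 {F V : Type*} [Field F] [CharP F 2] [AddCommGroup V] [Module F V]
    [FiniteDimensional F V] (q : QuadraticForm F V)
    (hq : LinearMap.BilinForm.Nondegenerate (QuadraticMap.polarBilin q))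
    (τ : V →ₗ[F] V) (hτ : ∀ x, q (τ x) = q x)
    (hinv : τ ∘ₗ τ = LinearMap.id)
    (hRK : LinearMap.range (τ - LinearMap.id) = LinearMap.ker (τ - LinearMap.id)) :
    (∀ x : V, QuadraticMap.polarBilin q (τ x - x) x = q (τ x - x)) ∧
    (∀ x y : V, QuadraticMap.polarBilin q (τ (x + y) - (x + y)) (x + y) =
      QuadraticMap.polarBilin q (τ x - x) x + QuadraticMap.polarBilin q (τ y - y) y) :=
  wall_stmt18_general q τ hτ hRK
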